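/- arXiv:1303.6981 — 2 statements merged into one kernel-verified Lean document; each statement's English description precedes it below -/
import Mathlib

section
/- Let 𝒞 be a field on Ω and P a price assignment. If P is coherent in betting system 3, then P is a countably additive probability and there is no infinite sequence of pairwise disjoint sets in 𝒞 of positive P-probability (equivalently, Ω partitions into finitely many 𝒞-measurable atoms). -/
open Filter MeasureTheory ENNReal

variable {Ω : Type*}

noncomputable def ind (A : Set Ω) (ω : Ω) : ℝ := A.indicator (fun _ => (1:ℝ)) ω

def SeriesTendsTo (f : ℕ → ℝ) (x : ℝ) : Prop :=
  Tendsto (fun n => ∑ i ∈ Finset.range n, f i) atTop (nhds x)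

def SeriesConv (f : ℕ → ℝ) : Prop := ∃ x, SeriesTendsTo f x

noncomputable def bterm (P : Set Ω → ℝ) (α : ℕ → ℝ) (A : ℕ → Set Ω) (ω : Ω) (i : ℕ) : ℝ :=
  α i * (ind (A i) ω - P (A i))

def IsSetField (C : Set (Set Ω)) : Prop :=
  Set.univ ∈ C ∧ (∀ A ∈ C, Aᶜ ∈ C) ∧ ∀ A ∈ C, ∀ B ∈ C, A ∪ B ∈ C

def System1 (C : Set (Set Ω)) (α : ℕ → ℝ) (A : ℕ → Set Ω) : Prop :=
  (∀ i, A i ∈ C) ∧ {i | α i ≠ 0}.Finite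

def System2 (C : Set (Set Ω)) (P : Set Ω → ℝ) (α : ℕ → ℝ) (A : ℕ → Set Ω) : Prop :=
  (∀ i, A i ∈ C) ∧ Summable (fun i => |α i| * P (A i)) ∧
    ∀ ω, SeriesConv (bterm P α A ω)

def System2A (C : Set (Set Ω)) (P : Set Ω → ℝ) (α : ℕ → ℝ) (A : ℕ → Set Ω) : Prop :=
  (∀ i, A i ∈ C) ∧ ∀ ω, Summable (fun i => |bterm P α A ω i|)

def System2B (C : Set (Set Ω)) (P : Set Ω → ℝ) (α : ℕ → ℝ) (A : ℕ → Set Ω) : Prop :=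
  (∀ i, A i ∈ C) ∧ ∃ M : ℝ, ∀ ω, ∀ n, ∑ i ∈ Finset.range n, |bterm P α A ω i| ≤ M

def System3 (C : Set (Set Ω)) (P : Set Ω → ℝ) (α : ℕ → ℝ) (A : ℕ → Set Ω) : Prop :=
  (∀ i, A i ∈ C) ∧ SeriesConv (fun i => α i * P (A i)) ∧
    ∀ ω, SeriesConv (bterm P α A ω)

def IncoherentIn (P : Set Ω → ℝ) (S : (ℕ → ℝ) → (ℕ → Set Ω) → Prop) : Prop :=
  ∃ α A, S α A ∧ ∃ ε > (0:ℝ), ∀ ω, ∃ L, SeriesTendsTo (bterm P α A ω) L ∧ L ≤ -ε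

def CoherentIn (P : Set Ω → ℝ) (S : (ℕ → ℝ) → (ℕ → Set Ω) → Prop) : Prop :=
  ¬ IncoherentIn P S

def IsNullSet (C : Set (Set Ω)) (P : Set Ω → ℝ) (Z : Set Ω) : Prop :=
  ∀ δ : ℝ, 0 < δ → ∃ Zd ∈ C, Z ⊆ Zd ∧ P Zd < δ

def WeaklyIncoherentIn (C : Set (Set Ω)) (P : Set Ω → ℝ)
    (S : (ℕ → ℝ) → (ℕ → Set Ω) → Prop) : Prop :=
  ∃ α A, S α A ∧ ∃ ε > (0:ℝ), ∃ Z : Set Ω, IsNullSet C P Z ∧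
    ∀ ω ∉ Z, ∃ L, SeriesTendsTo (bterm P α A ω) L ∧ L ≤ -ε

def StronglyCoherentIn (C : Set (Set Ω)) (P : Set Ω → ℝ)
    (S : (ℕ → ℝ) → (ℕ → Set Ω) → Prop) : Prop :=
  ¬ WeaklyIncoherentIn C P S

def IrrationalIn (P : Set Ω → ℝ) (S : (ℕ → ℝ) → (ℕ → Set Ω) → Prop) : Prop :=
  ∃ α A, S α A ∧ ∀ ω, ∃ L, SeriesTendsTo (bterm P α A ω) L ∧ L < 0

def RationalIn (P : Set Ω → ℝ) (S : (ℕ → ℝ) → (ℕ → Set Ω) → Prop) : Prop :=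
  ¬ IrrationalIn P S

def IsCAProb (C : Set (Set Ω)) (P : Set Ω → ℝ) : Prop :=
  P Set.univ = 1 ∧ (∀ A ∈ C, 0 ≤ P A) ∧
  (∀ A ∈ C, ∀ B ∈ C, Disjoint A B → P (A ∪ B) = P A + P B) ∧
  (∀ A : ℕ → Set Ω, (∀ i, A i ∈ C) → Pairwise (Function.onFun Disjoint A) →
    (⋃ i, A i) ∈ C → HasSum (fun i => P (A i)) (P (⋃ i, A i)))

def IsPAtom (C : Set (Set Ω)) (P : Set Ω → ℝ) (F : Set Ω) : Prop :=
  F ∈ C ∧ 0 < P F ∧ ∀ B ∈ C, B ⊆ F → P B = P F ∨ P B = 0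

def FiniteAtomicPartition (C : Set (Set Ω)) (P : Set Ω → ℝ) : Prop :=
  ∃ (n : ℕ) (F : Fin n → Set Ω), (∀ j, IsPAtom C P (F j)) ∧
    Pairwise (Function.onFun Disjoint F) ∧ (⋃ j, F j) = Set.univ

def IsPFinite (C : Set (Set Ω)) (P : Set Ω → ℝ) : Prop :=
  ∀ B : ℕ → Set Ω, (∀ i, B i ∈ C) → (∀ i, B (i+1) ⊆ B i) →
    Tendsto (fun i => P (B i)) atTop (nhds 0) → ∃ j, P (B j) = 0

/-!
Each defining property of a countably additive probability is forced by a portfolio whose payoff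
is the same at every `ω` (or bounded on one side): coherence makes its price equal to (or bounded
by) that payoff. For countable additivity, the bound `∑ i < n, P (A i) ≤ P (⋃ i, A i)` first makes
the price series summable; then selling `⋃ i, A i` and buying every `A i` pays `0`.

If infinitely many disjoint `A j` had positive probability, buy each `A j` once for `1 / (j + 1)`
and sell it twice for `1 / (2 * j + 2)`, interleaved so that the prices
`1 - 1/2 + 1/2 - 1/2 + 1/3 - 1/4 + 1/4 - 1/4 + ⋯` form an alternating series with nonincreasing
terms. It converges to a sum `≥ 1/2` (in fact `log 2`), while at every `ω` the payoff is eventually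
`0`: a sure loss.
-/

open Finset

section Indicator

lemma ind_nonneg (A : Set Ω) (ω : Ω) : 0 ≤ ind A ω :=
  Set.indicator_nonneg (fun _ _ => zero_le_one) ω

lemma ind_union_of_disjoint {A B : Set Ω} (h : Disjoint A B) (ω : Ω) :
    ind (A ∪ B) ω = ind A ω + ind B ω := by
  simp only [ind, Set.indicator_union_of_disjoint h]

variable {A : ℕ → Set Ω} (hA : Pairwise (Function.onFun Disjoint A))
include hA

lemma ind_eq_ite_of_mem {j : ℕ} {ω : Ω} (hω : ω ∈ A j) (i : ℕ) :
    ind (A i) ω = if i = j then 1 else 0 := by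
  by_cases hij : i = j
  · subst hij; simp [ind, hω]
  · simp [ind, hij, Set.disjoint_left.1 (hA (Ne.symm hij)) hω]

lemma hasSum_ind_iUnion (ω : Ω) : HasSum (fun i => ind (A i) ω) (ind (⋃ i, A i) ω) := by
  by_cases hω : ∃ j, ω ∈ A j
  · obtain ⟨j, hj⟩ := hω
    rw [funext (ind_eq_ite_of_mem hA hj), ind, Set.indicator_of_mem (Set.mem_iUnion.2 ⟨j, hj⟩)]
    exact hasSum_ite_eq j 1
  · simp only [not_exists] at hω
    simp [ind, hω]

end Indicator

lemma SeriesTendsTo.neg {f : ℕ → ℝ} {x : ℝ} (h : SeriesTendsTo f x) :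
    SeriesTendsTo (fun i => -f i) (-x) := by
  simpa only [SeriesTendsTo, sum_neg_distrib] using Tendsto.neg h

lemma seriesTendsTo_bterm {P : Set Ω → ℝ} {α : ℕ → ℝ} {A : ℕ → Set Ω} {ω : Ω} {p q : ℝ}
    (hq : SeriesTendsTo (fun i => α i * ind (A i) ω) q)
    (hp : SeriesTendsTo (fun i => α i * P (A i)) p) :
    SeriesTendsTo (bterm P α A ω) (q - p) := by
  simpa only [SeriesTendsTo, bterm, mul_sub, sum_sub_distrib] using hq.sub hp

namespace CoherentIn

variable {C : Set (Set Ω)} {P : Set Ω → ℝ} (hcoh : CoherentIn P (System3 C P))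
include hcoh

theorem price_le_of_payoff_le {α : ℕ → ℝ} {A : ℕ → Set Ω} (hA : ∀ i, A i ∈ C) {p r : ℝ}
    (hp : SeriesTendsTo (fun i => α i * P (A i)) p)
    (hq : ∀ ω, ∃ q ≤ r, SeriesTendsTo (fun i => α i * ind (A i) ω) q) : p ≤ r := by
  by_contra! hrp
  choose q hqr hq using hq
  exact hcoh ⟨α, A, ⟨hA, ⟨p, hp⟩, fun ω => ⟨_, seriesTendsTo_bterm (hq ω) hp⟩⟩, p - r,
    sub_pos.2 hrp, fun ω => ⟨_, seriesTendsTo_bterm (hq ω) hp, by linarith [hqr ω]⟩⟩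

theorem price_eq_of_payoff_eq {α : ℕ → ℝ} {A : ℕ → Set Ω} (hA : ∀ i, A i ∈ C) {p r : ℝ}
    (hp : SeriesTendsTo (fun i => α i * P (A i)) p)
    (hq : ∀ ω, SeriesTendsTo (fun i => α i * ind (A i) ω) r) : p = r := by
  refine le_antisymm (hcoh.price_le_of_payoff_le hA hp fun ω => ⟨r, le_rfl, hq ω⟩) ?_
  have hsell := hcoh.price_le_of_payoff_le (α := fun i => -α i) hA
    (by simpa only [neg_mul] using hp.neg)
    (fun ω => ⟨-r, le_rfl, by simpa only [neg_mul] using (hq ω).neg⟩)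
  linarith

theorem finite_price_le_of_payoff_le (huniv : Set.univ ∈ C) {n : ℕ} (α : Fin n → ℝ)
    (A : Fin n → Set Ω) (hA : ∀ i, A i ∈ C) {r : ℝ}
    (hq : ∀ ω, ∑ i, α i * ind (A i) ω ≤ r) : ∑ i, α i * P (A i) ≤ r := by
  let α' : ℕ → ℝ := fun i => if h : i < n then α ⟨i, h⟩ else 0
  let A' : ℕ → Set Ω := fun i => if h : i < n then A ⟨i, h⟩ else Set.univ
  have hsum (g : Set Ω → ℝ) : HasSum (fun i => α' i * g (A' i)) (∑ i, α i * g (A i)) := by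
    have hzero : ∀ i ∉ range n, α' i * g (A' i) = 0 := fun i hi => by
      simp [α', show ¬ i < n by simpa using hi]
    convert hasSum_sum_of_ne_finset_zero (L := .unconditional ℕ) hzero using 1
    simp [sum_range, α', A']
  have hA' : ∀ i, A' i ∈ C := fun i => by unfold A'; split_ifs <;> simp [hA, huniv]
  exact hcoh.price_le_of_payoff_le hA' (hsum P).tendsto_sum_nat
    fun ω => ⟨_, hq ω, (hsum fun B => ind B ω).tendsto_sum_nat⟩

theorem finite_price_eq_of_payoff_eq (huniv : Set.univ ∈ C) {n : ℕ} (α : Fin n → ℝ)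
    (A : Fin n → Set Ω) (hA : ∀ i, A i ∈ C) {r : ℝ}
    (hq : ∀ ω, ∑ i, α i * ind (A i) ω = r) : ∑ i, α i * P (A i) = r := by
  refine le_antisymm (hcoh.finite_price_le_of_payoff_le huniv α A hA fun ω => (hq ω).le) ?_
  have hsell := hcoh.finite_price_le_of_payoff_le huniv (fun i => -α i) A hA (r := -r)
    fun ω => by simp [neg_mul, sum_neg_distrib, hq ω]
  simp only [neg_mul, sum_neg_distrib, neg_le_neg_iff] at hsell
  exact hsell

theorem prob_univ (huniv : Set.univ ∈ C) : P Set.univ = 1 := by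
  simpa [ind] using hcoh.finite_price_eq_of_payoff_eq huniv ![1] ![Set.univ]
    (by simp [huniv]) (r := 1) fun ω => by simp [ind]

theorem nonneg (huniv : Set.univ ∈ C) {A : Set Ω} (hA : A ∈ C) : 0 ≤ P A := by
  simpa using hcoh.finite_price_le_of_payoff_le huniv ![-1] ![A] (by simp [hA]) (r := 0)
    fun ω => by simpa using ind_nonneg A ω

theorem additive (hC : IsSetField C) {A B : Set Ω} (hA : A ∈ C) (hB : B ∈ C)
    (hAB : Disjoint A B) : P (A ∪ B) = P A + P B := by
  have h := hcoh.finite_price_eq_of_payoff_eq hC.1 ![1, 1, -1] ![A, B, A ∪ B]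
    (by simp [Fin.forall_fin_succ, hA, hB, hC.2.2 A hA B hB]) (r := 0)
    fun ω => by simp [Fin.sum_univ_three, ind_union_of_disjoint hAB]
  simp only [Fin.sum_univ_three, Matrix.cons_val_zero, Matrix.cons_val_one, Matrix.cons_val,
    one_mul, neg_mul] at h
  linarith

section Countable

variable (huniv : Set.univ ∈ C) {A : ℕ → Set Ω} (hA : ∀ i, A i ∈ C)
  (hdisj : Pairwise (Function.onFun Disjoint A)) (hU : (⋃ i, A i) ∈ C)
include huniv hA hdisj hU

theorem sum_range_le_iUnion (n : ℕ) : ∑ i ∈ range n, P (A i) ≤ P (⋃ i, A i) := by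
  have h := hcoh.finite_price_le_of_payoff_le huniv (n := n + 1) (Fin.cons (-1) fun _ => 1)
    (Fin.cons (⋃ i, A i) fun i => A i) (Fin.cases hU fun i => hA i) (r := 0) fun ω => by
      have := sum_le_hasSum (range n) (fun i _ => ind_nonneg _ ω) (hasSum_ind_iUnion hdisj ω)
      simpa [Fin.sum_univ_succ, sum_range] using this
  simpa [Fin.sum_univ_succ, sum_range] using h

theorem hasSum_iUnion : HasSum (fun i => P (A i)) (P (⋃ i, A i)) := by
  have hsum : Summable fun i => P (A i) :=
    summable_of_sum_range_le (fun i => hcoh.nonneg huniv (hA i))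
      (hcoh.sum_range_le_iUnion huniv hA hdisj hU)
  let α : ℕ → ℝ := fun | 0 => -1 | _ + 1 => 1
  let B : ℕ → Set Ω := fun | 0 => ⋃ i, A i | i + 1 => A i
  have hprice : HasSum (fun i => α i * P (B i)) (∑' i, P (A i) - P (⋃ i, A i)) := by
    rw [← hasSum_nat_add_iff' 1]
    simpa [α, B] using hsum.hasSum
  have hpayoff (ω : Ω) : HasSum (fun i => α i * ind (B i) ω) 0 := by
    rw [← hasSum_nat_add_iff' 1]
    simpa [α, B] using hasSum_ind_iUnion hdisj ω
  have h := hcoh.price_eq_of_payoff_eq (fun | 0 => hU | i + 1 => hA i)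
    hprice.tendsto_sum_nat fun ω => (hpayoff ω).tendsto_sum_nat
  rw [← sub_eq_zero.1 h]
  exact hsum.hasSum

end Countable

theorem isCAProb (hC : IsSetField C) : IsCAProb C P :=
  ⟨hcoh.prob_univ hC.1, fun _ => hcoh.nonneg hC.1, fun _ hA _ hB => hcoh.additive hC hA hB,
    fun _ hA hdisj hU => hcoh.hasSum_iUnion hC.1 hA hdisj hU⟩

end CoherentIn

-- Step `t` trades `A (rearrIndex t)` for `rearrPrice t`: step `2 * j` buys `A j`, steps
-- `4 * j + 1` and `4 * j + 3` sell it back.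
def rearrIndex (t : ℕ) : ℕ := if t % 2 = 0 then t / 2 else t / 4

def rearrDen (t : ℕ) : ℕ := if t % 2 = 0 then t / 2 + 1 else 2 * (t / 4) + 2

noncomputable def rearrPrice (t : ℕ) : ℝ := (-1) ^ t * ((rearrDen t : ℝ))⁻¹

lemma rearrDen_pos (t : ℕ) : 0 < rearrDen t := by
  unfold rearrDen; split_ifs <;> omega

lemma monotone_rearrDen : Monotone rearrDen :=
  monotone_nat_of_le_succ fun t => by unfold rearrDen; split_ifs <;> omega

lemma tendsto_rearrDen : Tendsto rearrDen atTop atTop :=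
  tendsto_atTop_atTop.2 fun b => ⟨4 * b, fun t ht => by unfold rearrDen; split_ifs <;> omega⟩

lemma antitone_inv_rearrDen : Antitone fun t => ((rearrDen t : ℝ))⁻¹ :=
  fun _ _ hst => inv_anti₀ (by exact_mod_cast rearrDen_pos _)
    (by exact_mod_cast monotone_rearrDen hst)

lemma exists_seriesTendsTo_rearrPrice : ∃ l, SeriesTendsTo rearrPrice l ∧ 1 / 2 ≤ l := by
  have h0 : Tendsto (fun t => ((rearrDen t : ℝ))⁻¹) atTop (nhds 0) :=
    tendsto_inv_atTop_zero.comp (tendsto_natCast_atTop_atTop.comp tendsto_rearrDen)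
  obtain ⟨l, hl⟩ := antitone_inv_rearrDen.tendsto_alternating_series_of_tendsto_zero h0
  refine ⟨l, hl, ?_⟩
  have h2 := antitone_inv_rearrDen.alternating_series_le_tendsto hl 1
  norm_num [sum_range_succ, rearrDen] at h2
  linarith

lemma sum_range_rearrPrice_eq_zero (j : ℕ) {n : ℕ} (hn : 4 * j + 4 ≤ n) :
    ∑ t ∈ range n, (if rearrIndex t = j then rearrPrice t else 0) = 0 := by
  have hfilter : (range n).filter (fun t => rearrIndex t = j) = {2 * j, 4 * j + 1, 4 * j + 3} := by
    ext t
    rw [mem_filter, mem_range]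
    simp only [mem_insert, mem_singleton, rearrIndex]
    split_ifs <;> omega
  rw [← sum_filter, hfilter, sum_insert (by simp; omega), sum_insert (by simp),
    sum_singleton]
  have h1 : rearrDen (2 * j) = j + 1 := by unfold rearrDen; split_ifs <;> omega
  have h2 : rearrDen (4 * j + 1) = 2 * j + 2 := by unfold rearrDen; split_ifs <;> omega
  have h3 : rearrDen (4 * j + 3) = 2 * j + 2 := by unfold rearrDen; split_ifs <;> omega
  rw [rearrPrice, rearrPrice, rearrPrice, h1, h2, h3, Even.neg_one_pow ⟨j, by ring⟩,
    Odd.neg_one_pow ⟨2 * j, by ring⟩, Odd.neg_one_pow ⟨2 * j + 1, by ring⟩]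
  push_cast
  field_simp
  ring

lemma seriesTendsTo_rearr_payoff {P : Set Ω → ℝ} {A : ℕ → Set Ω}
    (hdisj : Pairwise (Function.onFun Disjoint A)) (ω : Ω) :
    SeriesTendsTo
      (fun t => rearrPrice t / P (A (rearrIndex t)) * ind (A (rearrIndex t)) ω) 0 := by
  by_cases hω : ∃ j, ω ∈ A j
  · obtain ⟨j, hj⟩ := hω
    have hsum (n : ℕ) (hn : 4 * j + 4 ≤ n) :
        ∑ t ∈ range n, rearrPrice t / P (A (rearrIndex t)) * ind (A (rearrIndex t)) ω = 0 := by
      calc ∑ t ∈ range n, rearrPrice t / P (A (rearrIndex t)) * ind (A (rearrIndex t)) ω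
          = (P (A j))⁻¹ * ∑ t ∈ range n, if rearrIndex t = j then rearrPrice t else 0 := by
            rw [mul_sum]
            refine sum_congr rfl fun t _ => ?_
            simp only [ind_eq_ite_of_mem hdisj hj, mul_ite, mul_one, mul_zero]
            split_ifs with ht <;> simp only [ht, div_eq_inv_mul]
        _ = 0 := by rw [sum_range_rearrPrice_eq_zero j hn, mul_zero]
    exact tendsto_const_nhds.congr'
      ((eventually_ge_atTop _).mono fun n hn => (hsum n hn).symm)
  · simp only [not_exists] at hω
    simp [SeriesTendsTo, ind, hω]

theorem CoherentIn.not_exists_disjoint_pos {C : Set (Set Ω)} {P : Set Ω → ℝ}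
    (hcoh : CoherentIn P (System3 C P)) :
    ¬ ∃ A : ℕ → Set Ω, (∀ i, A i ∈ C) ∧ Pairwise (Function.onFun Disjoint A) ∧
        ∀ i, 0 < P (A i) := by
  rintro ⟨A, hA, hdisj, hpos⟩
  obtain ⟨l, hl, hl_half⟩ := exists_seriesTendsTo_rearrPrice
  have hprice : SeriesTendsTo
      (fun t => rearrPrice t / P (A (rearrIndex t)) * P (A (rearrIndex t))) l := by
    simpa only [div_mul_cancel₀ _ (hpos _).ne'] using hl
  have := hcoh.price_eq_of_payoff_eq (fun t => hA _) hprice (seriesTendsTo_rearr_payoff hdisj)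
  linarith

theorem stmt8 (C : Set (Set Ω)) (P : Set Ω → ℝ) (hC : IsSetField C)
    (hcoh : CoherentIn P (System3 C P)) :
    IsCAProb C P ∧
    ¬ ∃ A : ℕ → Set Ω, (∀ i, A i ∈ C) ∧ Pairwise (Function.onFun Disjoint A) ∧
        ∀ i, 0 < P (A i) :=
  ⟨hcoh.isCAProb hC, hcoh.not_exists_disjoint_pos⟩
end

section
/- Let 𝒞 be a field on Ω and P a countably additive probability with extension P* to σ(𝒞). For every betting portfolio (α_i, A_i)_{i≥1} with A_i ∈ 𝒞 such that Σ_{i=1}^∞ |α_i(I_{A_i}(ω) − P(A_i))| < ∞ for every ω ∈ Ω (betting system 2A), one has Σ_{i=1}^∞ |α_i| P(A_i)(1 − P(A_i)) < ∞ and E_{P*}[Σ α_i(I_{A_i} − P(A_i))] = 0. Hence P is coherent in betting system 2A. -/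
open Filter MeasureTheory ENNReal

variable {Ω : Type*}

/-! Each bet `α i * (ind (A i) - P (A i))` has mean zero and L¹-norm `2 |α i| p (1 - p)` with
`p = P (A i)`, while at every single outcome its absolute value is at least `|α i| p (1 - p)`.
So absolute convergence of the gain at one outcome already makes the L¹-norms summable, the
series may be integrated term by term, and the total gain has expectation zero: it cannot be
`≤ -ε` at every outcome. -/
theorem MeasureTheory.integrable_tsum_of_summable_integral_norm {α E ι : Type*}
    [MeasurableSpace α] {μ : Measure α} [NormedAddCommGroup E] [Countable ι] {F : ι → α → E}
    (hF_int : ∀ i, Integrable (F i) μ) (hF_sum : Summable fun i ↦ ∫ a, ‖F i a‖ ∂μ)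
    (hF : ∀ᵐ a ∂μ, Summable fun i ↦ F i a) :
    Integrable (fun a ↦ ∑' i, F i a) μ := by
  refine ⟨aestronglyMeasurable_of_tendsto_ae _ (f := fun s a ↦ ∑ i ∈ s, F i a)
    (fun s ↦ Finset.aestronglyMeasurable_fun_sum _ fun i _ ↦ (hF_int i).1)
    (hF.mono fun a h ↦ h.hasSum), ?_⟩
  rw [hasFiniteIntegral_iff_enorm]
  calc ∫⁻ a, ‖∑' i, F i a‖ₑ ∂μ ≤ ∫⁻ a, ∑' i, ‖F i a‖ₑ ∂μ :=
        lintegral_mono fun a ↦ enorm_tsum_le_tsum_enorm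
    _ = ∑' i, ∫⁻ a, ‖F i a‖ₑ ∂μ := lintegral_tsum fun i ↦ (hF_int i).1.enorm
    _ = ∑' i, ENNReal.ofReal (∫ a, ‖F i a‖ ∂μ) := by
        simp_rw [ofReal_integral_norm_eq_lintegral_enorm (hF_int _)]
    _ = ENNReal.ofReal (∑' i, ∫ a, ‖F i a‖ ∂μ) :=
        (ENNReal.ofReal_tsum_of_nonneg (fun i ↦ integral_nonneg fun a ↦ norm_nonneg _) hF_sum).symm
    _ < ⊤ := ENNReal.ofReal_lt_top

theorem abs_ind_sub (A : Set Ω) (ω : Ω) {p : ℝ} (h0 : 0 ≤ p) (h1 : p ≤ 1) :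
    |ind A ω - p| = (1 - 2 * p) * ind A ω + p := by
  by_cases h : ω ∈ A
  · rw [ind, Set.indicator_of_mem h, abs_of_nonneg (by linarith)]
    ring
  · rw [ind, Set.indicator_of_notMem h, abs_of_nonpos (by linarith)]
    ring

theorem mul_one_sub_le_abs_ind_sub (A : Set Ω) (ω : Ω) {p : ℝ} (h0 : 0 ≤ p) (h1 : p ≤ 1) :
    p * (1 - p) ≤ |ind A ω - p| := by
  rw [abs_ind_sub A ω h0 h1]
  by_cases h : ω ∈ A
  · rw [ind, Set.indicator_of_mem h]
    nlinarith
  · rw [ind, Set.indicator_of_notMem h]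
    nlinarith

theorem summable_mul_one_sub_of_summable_abs_bterm {P : Set Ω → ℝ} {α : ℕ → ℝ}
    {A : ℕ → Set Ω} (h0 : ∀ i, 0 ≤ P (A i)) (h1 : ∀ i, P (A i) ≤ 1) {ω : Ω}
    (h : Summable fun i ↦ |bterm P α A ω i|) :
    Summable fun i ↦ |α i| * P (A i) * (1 - P (A i)) := by
  refine h.of_nonneg_of_le (fun i ↦ ?_) fun i ↦ ?_
  · exact mul_nonneg (mul_nonneg (abs_nonneg _) (h0 i)) (sub_nonneg.2 (h1 i))
  · rw [bterm, abs_mul, mul_assoc]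
    exact mul_le_mul_of_nonneg_left (mul_one_sub_le_abs_ind_sub _ _ (h0 i) (h1 i)) (abs_nonneg _)

section Integration

variable [MeasurableSpace Ω] {μ : Measure Ω} {A : Set Ω}

theorem integrable_ind [IsFiniteMeasure μ] (hA : MeasurableSet A) : Integrable (ind A) μ :=
  (integrable_const 1).indicator hA

theorem integral_ind (hA : MeasurableSet A) : ∫ ω, ind A ω ∂μ = μ.real A :=
  integral_indicator_one hA

variable [IsProbabilityMeasure μ]

theorem integral_ind_sub_measureReal (hA : MeasurableSet A) :
    ∫ ω, (ind A ω - μ.real A) ∂μ = 0 := by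
  rw [integral_sub (integrable_ind hA) (integrable_const _), integral_ind hA, integral_const,
    probReal_univ, one_smul, sub_self]

theorem integral_abs_ind_sub_measureReal (hA : MeasurableSet A) :
    ∫ ω, |ind A ω - μ.real A| ∂μ = 2 * (μ.real A * (1 - μ.real A)) := by
  simp_rw [abs_ind_sub A _ measureReal_nonneg measureReal_le_one]
  rw [integral_add ((integrable_ind hA).const_mul _) (integrable_const _), integral_const_mul,
    integral_ind hA, integral_const, probReal_univ, one_smul]
  ring

variable {P : Set Ω → ℝ} {α : ℕ → ℝ} {A : ℕ → Set Ω}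

theorem integrable_bterm (hA : ∀ i, MeasurableSet (A i)) (i : ℕ) :
    Integrable (fun ω ↦ bterm P α A ω i) μ :=
  ((integrable_ind (hA i)).sub (integrable_const _)).const_mul (α i)

theorem integral_bterm (hA : ∀ i, MeasurableSet (A i)) (hPA : ∀ i, μ.real (A i) = P (A i))
    (i : ℕ) : ∫ ω, bterm P α A ω i ∂μ = 0 := by
  simp only [bterm, ← hPA]
  rw [integral_const_mul, integral_ind_sub_measureReal (hA i), mul_zero]

theorem integral_abs_bterm (hA : ∀ i, MeasurableSet (A i)) (hPA : ∀ i, μ.real (A i) = P (A i))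
    (i : ℕ) : ∫ ω, |bterm P α A ω i| ∂μ = 2 * (|α i| * P (A i) * (1 - P (A i))) := by
  simp only [bterm, abs_mul, ← hPA]
  rw [integral_const_mul, integral_abs_ind_sub_measureReal (hA i)]
  ring

theorem integrable_and_integral_eq_zero_of_seriesTendsTo (hA : ∀ i, MeasurableSet (A i))
    (hPA : ∀ i, μ.real (A i) = P (A i))
    (hvar : Summable fun i ↦ |α i| * P (A i) * (1 - P (A i)))
    (hsum : ∀ ω, Summable (bterm P α A ω)) {b : Ω → ℝ}
    (hb : ∀ ω, SeriesTendsTo (bterm P α A ω) (b ω)) :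
    Integrable b μ ∧ ∫ ω, b ω ∂μ = 0 := by
  have hb_eq : b = fun ω ↦ ∑' i, bterm P α A ω i :=
    funext fun ω ↦ tendsto_nhds_unique (hb ω) (hsum ω).hasSum.tendsto_sum_nat
  have hL1 : Summable fun i ↦ ∫ ω, ‖bterm P α A ω i‖ ∂μ := by
    simpa only [Real.norm_eq_abs, integral_abs_bterm hA hPA] using hvar.mul_left 2
  subst hb_eq
  refine ⟨integrable_tsum_of_summable_integral_norm (integrable_bterm hA) hL1
    (ae_of_all _ hsum), ?_⟩
  rw [← integral_tsum_of_summable_integral_norm (integrable_bterm hA) hL1]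
  simp [integral_bterm hA hPA]

theorem System2A.summable_and_integral_eq_zero {C : Set (Set Ω)}
    (hC : ∀ B ∈ C, MeasurableSet B) (hPμ : ∀ B ∈ C, μ.real B = P B) (h : System2A C P α A) :
    Summable (fun i ↦ |α i| * P (A i) * (1 - P (A i))) ∧
      ∀ b : Ω → ℝ, (∀ ω, SeriesTendsTo (bterm P α A ω) (b ω)) →
        Integrable b μ ∧ ∫ ω, b ω ∂μ = 0 := by
  obtain ⟨hAC, hsum⟩ := h
  have hA i : MeasurableSet (A i) := hC _ (hAC i)
  have hPA i : μ.real (A i) = P (A i) := hPμ _ (hAC i)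
  obtain ⟨ω₀⟩ := nonempty_of_isProbabilityMeasure μ
  have hvar := summable_mul_one_sub_of_summable_abs_bterm
    (fun i ↦ hPA i ▸ measureReal_nonneg) (fun i ↦ hPA i ▸ measureReal_le_one) (hsum ω₀)
  exact ⟨hvar, fun b hb ↦ integrable_and_integral_eq_zero_of_seriesTendsTo hA hPA hvar
    (fun ω ↦ (hsum ω).of_abs) hb⟩

end Integration

theorem coherentIn_of_integral_eq_zero [MeasurableSpace Ω] (μ : Measure Ω)
    [IsProbabilityMeasure μ] {P : Set Ω → ℝ} {S : (ℕ → ℝ) → (ℕ → Set Ω) → Prop}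
    (h : ∀ α A, S α A → ∀ b : Ω → ℝ, (∀ ω, SeriesTendsTo (bterm P α A ω) (b ω)) →
      Integrable b μ ∧ ∫ ω, b ω ∂μ = 0) :
    CoherentIn P S := by
  rintro ⟨α, A, hS, ε, hε, hL⟩
  choose b hb hbε using hL
  obtain ⟨hint, hzero⟩ := h α A hS b hb
  have := integral_mono hint (integrable_const (-ε)) hbε
  rw [hzero, integral_const, probReal_univ, one_smul] at this
  linarith

theorem stmt13_general {Ω : Type*} [m : MeasurableSpace Ω] (C : Set (Set Ω)) (P : Set Ω → ℝ)
    (hP : IsCAProb C P)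
    (hm : m = MeasurableSpace.generateFrom C)
    (μ : Measure Ω) [IsProbabilityMeasure μ]
    (hμ : ∀ A ∈ C, μ A = ENNReal.ofReal (P A)) :
    (∀ α A, System2A C P α A →
      Summable (fun i => |α i| * P (A i) * (1 - P (A i))) ∧
      ∀ b : Ω → ℝ, (∀ ω, SeriesTendsTo (bterm P α A ω) (b ω)) →
        Integrable b μ ∧ ∫ ω, b ω ∂μ = 0) ∧
    CoherentIn P (System2A C P) := by
  have hmeas : ∀ B ∈ C, MeasurableSet B := by
    subst hm
    exact fun B hB ↦ MeasurableSpace.measurableSet_generateFrom hB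
  have hPμ : ∀ B ∈ C, μ.real B = P B := fun B hB ↦ by
    rw [measureReal_def, hμ B hB, ENNReal.toReal_ofReal (hP.2.1 B hB)]
  have main α A (h : System2A C P α A) := h.summable_and_integral_eq_zero hmeas hPμ
  exact ⟨main, coherentIn_of_integral_eq_zero μ fun α A h ↦ (main α A h).2⟩

theorem stmt13 {Ω : Type*} [m : MeasurableSpace Ω] (C : Set (Set Ω)) (P : Set Ω → ℝ)
    (hC : IsSetField C) (hP : IsCAProb C P)
    (hm : m = MeasurableSpace.generateFrom C)
    (μ : Measure Ω) [IsProbabilityMeasure μ]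
    (hμ : ∀ A ∈ C, μ A = ENNReal.ofReal (P A)) :
    (∀ α A, System2A C P α A →
      Summable (fun i => |α i| * P (A i) * (1 - P (A i))) ∧
      ∀ b : Ω → ℝ, (∀ ω, SeriesTendsTo (bterm P α A ω) (b ω)) →
        Integrable b μ ∧ ∫ ω, b ω ∂μ = 0) ∧
    CoherentIn P (System2A C P) :=
  stmt13_general (m := m) C P hP hm μ hμ
end
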